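/- arXiv:1104.5004 — 3 statements merged into one kernel-verified Lean document; each statement's English description precedes it below -/
import Mathlib

section
/- Let p be an odd prime and let H be the vertical stacking of j distinct layers L_{a_1}, ..., L_{a_j} (with a_1, ..., a_j distinct nonzero elements of Z_p, 1 ≤ j ≤ p-1). Then the F_2-rank of H equals j(p-1) + 1. -/
/-!
A vector `v` lies in the left kernel of the stacked matrix iff
`∑ a ∈ A, v (a, s - t a) = 0` for all `t, s`. Comparing the equations for `(t + 1, s)` and
`(t, s - a₀)` eliminates the layer `a₀` and leaves the same system for `A \ {a₀}`, satisfied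
by the differences `y ↦ v (a, y - a) - v (a, y - a₀)`. By induction these are constant in `y`;
they sum to zero over `ZMod p` and `p` is odd, so they vanish, i.e. `v (a, ·)` has the nonzero
period `a₀ - a` and is constant. Hence the left kernel consists of the vectors `v (a, y) = ε a`
with `∑ a, ε a = 0`, of dimension `|A| - 1`, and the rank is `|A| p - (|A| - 1)`.
-/

/-- `I(x)`: the `p × p` circulant permutation matrix over `F₂` with a one in
row `y` and column `x + y`. -/
def cpm (p : ℕ) (x : ZMod p) : Matrix (ZMod p) (ZMod p) (ZMod 2) :=
  fun y z => if z = x + y then 1 else 0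

/-- The layer `L_a`: the `p × p²` binary matrix horizontally concatenating
`I(0), I(a), …, I((p-1)a)`. -/
def layer (p : ℕ) (a : ZMod p) : Matrix (ZMod p) (ZMod p × ZMod p) (ZMod 2) :=
  fun y c => cpm p (c.1 * a) y c.2

/-- Vertical stacking of the layers `L_a` for `a` ranging over a finite set `A`. -/
def stack (p : ℕ) (A : Finset (ZMod p)) :
    Matrix ({a // a ∈ A} × ZMod p) (ZMod p × ZMod p) (ZMod 2) :=
  fun r c => layer p r.1.1 r.2 c

open Matrix

theorem ZMod.apply_eq_apply_zero_of_periodic {p : ℕ} [Fact p.Prime] {β : Type*}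
    {g : ZMod p → β} {d : ZMod p} (hg : Function.Periodic g d) (hd : d ≠ 0) (y : ZMod p) :
    g y = g 0 := by
  have hy : (y / d).val • d = y := by
    rw [nsmul_eq_mul, ZMod.natCast_zmod_val, div_mul_cancel₀ y hd]
  simpa [hy] using hg.nsmul (y / d).val 0

section ShearSums

variable {R : Type*} [CommRing R] {p : ℕ} {ι : Type*}

theorem sum_shear_sub_eq_zero [DecidableEq ι] {S : Finset ι} {i₀ : ι} (hi₀ : i₀ ∉ S)
    {c : ι → ZMod p} {f : ι → ZMod p → R}
    (hf : ∀ t s, ∑ i ∈ insert i₀ S, f i (s - t * c i) = 0) (t s : ZMod p) :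
    ∑ i ∈ S, (f i (s - t * c i - c i) - f i (s - t * c i - c i₀)) = 0 := by
  have h₁ := hf (t + 1) s
  have h₂ := hf t (s - c i₀)
  rw [Finset.sum_insert hi₀] at h₁ h₂
  rw [Finset.sum_sub_distrib]
  simp only [show ∀ i, s - t * c i - c i = s - (t + 1) * c i from fun i => by ring,
    show ∀ i, s - t * c i - c i₀ = s - c i₀ - t * c i from fun i => by ring]
  rw [show s - c i₀ - t * c i₀ = s - (t + 1) * c i₀ by ring] at h₂
  linear_combination h₁ - h₂

theorem apply_eq_apply_zero_of_sum_shear_eq_zero [NoZeroDivisors R] [Fact p.Prime]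
    (hp : (p : R) ≠ 0) {c : ι → ZMod p}
    (hc : Function.Injective c) (S : Finset ι) {f : ι → ZMod p → R}
    (hf : ∀ t s, ∑ i ∈ S, f i (s - t * c i) = 0) : ∀ i ∈ S, ∀ y, f i y = f i 0 := by
  classical
  induction S using Finset.induction_on generalizing f with
  | empty => simp
  | @insert i₀ S hi₀ ih =>
    have hS : ∀ i ∈ S, ∀ y, f i y = f i 0 := by
      intro i hi
      set g : ZMod p → R := fun y => f i (y - c i) - f i (y - c i₀)
      have hg_const : ∀ y, g y = g 0 :=
        ih (f := fun j y => f j (y - c j) - f j (y - c i₀)) (sum_shear_sub_eq_zero hi₀ hf) i hi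
      have hshift : ∀ a, ∑ y, f i (y - a) = ∑ y, f i y := fun a =>
        Fintype.sum_equiv (Equiv.subRight a) _ _ fun _ => rfl
      have hg_sum : ∑ y, g y = 0 := by
        rw [Finset.sum_sub_distrib, hshift, hshift, sub_self]
      have hg_zero : ∀ y, g y = 0 := by
        simp only [hg_const, Finset.sum_const, Finset.card_univ, ZMod.card, nsmul_eq_mul,
          mul_eq_zero, hp, false_or] at hg_sum
        simpa [hg_sum] using hg_const
      refine ZMod.apply_eq_apply_zero_of_periodic (d := c i₀ - c i) (fun z => ?_)
        (sub_ne_zero.mpr (hc.ne (by rintro rfl; exact hi₀ hi)))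
      simpa [g, sub_eq_zero, eq_comm, ← add_sub_assoc] using hg_zero (z + c i₀)
    intro i hi y
    rcases Finset.mem_insert.mp hi with rfl | hi
    · have h₀ : ∀ s, f i s = -∑ j ∈ S, f j s := fun s => by
        simpa [Finset.sum_insert hi₀, eq_neg_iff_add_eq_zero] using hf 0 s
      rw [h₀, h₀, Finset.sum_congr rfl fun j hj => hS j hj y]
    · exact hS i hi y

end ShearSums

section Stack

variable {p : ℕ} {A : Finset (ZMod p)}

theorem stack_transpose_mulVec_apply [NeZero p] (v : {a // a ∈ A} × ZMod p → ZMod 2)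
    (t s : ZMod p) :
    ((stack p A)ᵀ *ᵥ v) (t, s) = ∑ a : {a // a ∈ A}, v (a, s - t * a) := by
  simp only [mulVec, dotProduct, transpose_apply, stack, layer, cpm, Fintype.sum_prod_type,
    ite_mul, one_mul, zero_mul]
  refine Finset.sum_congr rfl fun a _ => ?_
  simp only [← sub_eq_iff_eq_add', eq_comm (a := s - _), Finset.sum_ite_eq', Finset.mem_univ,
    if_true]

variable [Fact p.Prime]

theorem ker_stack_transpose (hodd : p ≠ 2) :
    LinearMap.ker (stack p A)ᵀ.mulVecLin =
      (LinearMap.ker (dotProductEquiv (ZMod 2) {a // a ∈ A} 1)).map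
        (LinearMap.funLeft (ZMod 2) (ZMod 2) Prod.fst) := by
  have hp : (p : ZMod 2) ≠ 0 := ZMod.natCast_eq_zero_iff_even.not.mpr
    (Nat.not_even_iff_odd.mpr ((Fact.out : p.Prime).odd_of_ne_two hodd))
  ext v
  simp only [LinearMap.mem_ker, Submodule.mem_map, mulVecLin_apply, dotProductEquiv_apply_apply,
    one_dotProduct]
  constructor
  · intro hv
    replace hv : ∀ t s, ∑ a : {a // a ∈ A}, v (a, s - t * a) = 0 := fun t s => by
      rw [← stack_transpose_mulVec_apply, hv, Pi.zero_apply]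
    have hconst := apply_eq_apply_zero_of_sum_shear_eq_zero hp Subtype.val_injective
      Finset.univ (f := fun a y => v (a, y)) (by simpa using hv)
    refine ⟨fun a => v (a, 0), by simpa using hv 0 0, funext fun r => ?_⟩
    simp [LinearMap.funLeft_apply, ← hconst r.1 (Finset.mem_univ _) r.2]
  · rintro ⟨ε, hε, rfl⟩
    funext ⟨t, s⟩
    rw [stack_transpose_mulVec_apply]
    simpa [LinearMap.funLeft_apply] using hε

theorem finrank_ker_stack_transpose_add_one (hodd : p ≠ 2) (hA : A.Nonempty) :
    Module.finrank (ZMod 2) (LinearMap.ker (stack p A)ᵀ.mulVecLin) + 1 = A.card := by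
  have : Nonempty {a // a ∈ A} := hA.to_subtype
  rw [ker_stack_transpose hodd, ← (Submodule.equivMapOfInjective _
      (LinearMap.funLeft_injective_of_surjective _ _ _ Prod.fst_surjective) _).finrank_eq,
    Module.Dual.finrank_ker_add_one_of_ne_zero
      ((LinearEquiv.map_ne_zero_iff _).mpr one_ne_zero),
    Module.finrank_fintype_fun_eq_card, Fintype.card_coe]

end Stack

theorem stmt_6_general (p : ℕ) [Fact p.Prime] (hodd : p ≠ 2)
    (A : Finset (ZMod p)) (hA : A.Nonempty) :
    (stack p A).rank = A.card * (p - 1) + 1 := by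
  have hker := finrank_ker_stack_transpose_add_one hodd hA
  have hnullity := LinearMap.finrank_range_add_finrank_ker (stack p A)ᵀ.mulVecLin
  rw [Module.finrank_fintype_fun_eq_card, Fintype.card_prod, Fintype.card_coe, ZMod.card]
    at hnullity
  have hle : A.card ≤ A.card * p := Nat.le_mul_of_pos_right _ (Fact.out : p.Prime).pos
  rw [← rank_transpose, Matrix.rank, Nat.mul_sub_one]
  omega

/-- The `F₂`-rank of the stacking of `j` distinct layers `L_a`, `a` ranging
over a nonempty set `A` of nonzero residues (`1 ≤ j = |A| ≤ p-1`), equals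
`j(p-1) + 1`. -/
theorem stmt_6 (p : ℕ) [Fact p.Prime] (hodd : p ≠ 2)
    (A : Finset (ZMod p)) (hA : A.Nonempty) (hA0 : (0 : ZMod p) ∉ A) :
    (stack p A).rank = A.card * (p - 1) + 1 :=
  stmt_6_general p hodd A hA
end

section
/- Let p be an odd prime and 1 ≤ j ≤ p-1. A stacking H of j distinct layers L_{a_1}, ..., L_{a_j} contains no 4-cycle: no 2 × 2 all-ones submatrix exists in H. Equivalently, any two distinct rows of H share a one in at most one coordinate position. -/
/-
The rows of `L_a` are the lines `z = x a + y` of the affine plane over `𝔽_p`, read as sets of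
points `(x, z)`, and a row of the stacking is such a line with slope in `A`. Distinct rows are
distinct lines, and two distinct non-vertical lines in a plane over a field meet in at most one
point.
-/

lemma cpm_eq_one_iff {p : ℕ} {x y z : ZMod p} : cpm p x y z = 1 ↔ z = x + y := by
  unfold cpm
  split_ifs with h <;> simp [h]

lemma stack_eq_one_iff {p : ℕ} {A : Finset (ZMod p)} {r : {a // a ∈ A} × ZMod p}
    {c : ZMod p × ZMod p} : stack p A r c = 1 ↔ c.2 = c.1 * r.1.1 + r.2 :=
  cpm_eq_one_iff

lemma eq_of_mem_two_lines {R : Type*} [CommRing R] [NoZeroDivisors R] {a₁ b₁ a₂ b₂ : R}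
    (hne : (a₁, b₁) ≠ (a₂, b₂)) {x y x' y' : R}
    (h₁ : y = x * a₁ + b₁) (h₂ : y = x * a₂ + b₂)
    (h₁' : y' = x' * a₁ + b₁) (h₂' : y' = x' * a₂ + b₂) :
    (x, y) = (x', y') := by
  have ha : a₁ ≠ a₂ := by
    rintro rfl
    exact hne (Prod.ext rfl (by linear_combination h₂ - h₁))
  have hx : x = x' := by
    have hprod : (x - x') * (a₁ - a₂) = 0 := by linear_combination h₂ - h₁ + h₁' - h₂'
    exact sub_eq_zero.mp ((mul_eq_zero.mp hprod).resolve_right (sub_ne_zero.mpr ha))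
  subst hx
  rw [h₁, h₁']

theorem stmt_7_general (p : ℕ) [Fact p.Prime]
    (A : Finset (ZMod p))
    (r₁ r₂ : {a // a ∈ A} × ZMod p) (hr : r₁ ≠ r₂)
    (c c' : ZMod p × ZMod p)
    (h1 : stack p A r₁ c = 1) (h2 : stack p A r₂ c = 1)
    (h3 : stack p A r₁ c' = 1) (h4 : stack p A r₂ c' = 1) :
    c = c' := by
  rw [stack_eq_one_iff] at h1 h2 h3 h4
  have hlines : (r₁.1.1, r₁.2) ≠ (r₂.1.1, r₂.2) := fun h =>
    hr (Prod.ext (Subtype.ext (Prod.mk.inj h).1) (Prod.mk.inj h).2)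
  exact eq_of_mem_two_lines hlines h1 h2 h3 h4

/-- A stacking of distinct layers indexed by nonzero residues contains no
4-cycle: any two distinct rows share a one in at most one coordinate
position. -/
theorem stmt_7 (p : ℕ) [Fact p.Prime] (hodd : p ≠ 2)
    (A : Finset (ZMod p)) (hA : A.Nonempty) (hA0 : (0 : ZMod p) ∉ A)
    (r₁ r₂ : {a // a ∈ A} × ZMod p) (hr : r₁ ≠ r₂)
    (c c' : ZMod p × ZMod p)
    (h1 : stack p A r₁ c = 1) (h2 : stack p A r₂ c = 1)
    (h3 : stack p A r₁ c' = 1) (h4 : stack p A r₂ c' = 1) :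
    c = c' :=
  stmt_7_general p A r₁ r₂ hr c c' h1 h2 h3 h4
end

section
/- Let p ≥ 5 be an odd prime, A, B, R, H_1', H_2' as above with B \ R nonempty. Then rank(H_1' (H_2')^T) = 1 over F_2. -/
open Matrix

/-!
Row `y` of `L_a` has its ones at the positions `(c, c a + y)`, i.e. on a line of slope `a` in
`𝔽_p²`. Two lines of distinct slopes meet in exactly one point, so every entry of
`L_a L_bᵀ` is `1` when `a ≠ b`. The index sets `A ∪ R` and `B \ R` are disjoint because `A` and
`B` are, hence `H₁' H₂'ᵀ` is the all-ones matrix, which has rank one.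
-/

theorem Matrix.rank_vecMulVec_of_ne_zero {K m n : Type*} [Field K] [Fintype m] [Fintype n]
    {w : m → K} {v : n → K} (hw : w ≠ 0) (hv : v ≠ 0) : (vecMulVec w v).rank = 1 := by
  refine le_antisymm (rank_vecMulVec_le w v) (Nat.one_le_iff_ne_zero.mpr fun h0 => ?_)
  classical
  obtain ⟨j, hj⟩ := Function.ne_iff.mp hv
  rw [Matrix.rank, Submodule.finrank_eq_zero, LinearMap.range_eq_bot] at h0
  have hcol : vecMulVec w v *ᵥ Pi.single j 1 = v j • w := by
    ext i; simp [vecMulVec_apply, mulVec_single, mul_comm]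
  have hw0 : v j = 0 ∨ w = 0 := by
    simpa [Matrix.mulVecLin_apply, hcol] using LinearMap.congr_fun h0 (Pi.single j 1)
  exact hw (hw0.resolve_left hj)

theorem Matrix.rank_of_fun_one {K m n : Type*} [Field K] [Fintype m] [Fintype n] [Nonempty m]
    [Nonempty n] : (of fun (_ : m) (_ : n) => (1 : K)).rank = 1 := by
  have hones : (of fun (_ : m) (_ : n) => (1 : K)) = vecMulVec 1 1 := by
    ext; simp [vecMulVec_apply]
  exact hones ▸ rank_vecMulVec_of_ne_zero one_ne_zero one_ne_zero

theorem layer_mul_transpose_layer_of_ne {p : ℕ} [Fact p.Prime] {a b : ZMod p} (hab : a ≠ b) :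
    layer p a * (layer p b)ᵀ = of fun _ _ => 1 := by
  ext y z
  have lines_meet : ∀ c : ZMod p, c * a + y = c * b + z ↔ c = (z - y) / (a - b) := fun c => by
    rw [eq_div_iff (sub_ne_zero.mpr hab)]
    constructor <;> intro h <;> linear_combination h
  simp only [mul_apply, transpose_apply, layer, cpm, of_apply, Fintype.sum_prod_type, ite_mul,
    one_mul, zero_mul, Finset.sum_ite_eq', Finset.mem_univ, if_true, lines_meet]

theorem stack_mul_transpose_stack_of_disjoint {p : ℕ} [Fact p.Prime] {S T : Finset (ZMod p)}
    (hST : Disjoint S T) : stack p S * (stack p T)ᵀ = of fun _ _ => 1 := by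
  ext ⟨a, y⟩ ⟨b, z⟩
  have hab : (a : ZMod p) ≠ b := fun h => Finset.disjoint_left.mp hST a.2 (h ▸ b.2)
  exact congrFun (congrFun (layer_mul_transpose_layer_of_ne hab) y) z

theorem disjoint_image_natCast_Icc_halves (p : ℕ) :
    Disjoint ((Finset.Icc 1 ((p - 1) / 2)).image (Nat.cast : ℕ → ZMod p))
      ((Finset.Icc ((p + 1) / 2) (p - 1)).image (Nat.cast : ℕ → ZMod p)) := by
  simp only [Finset.disjoint_left, Finset.mem_image, Finset.mem_Icc]
  rintro _ ⟨n, hn, rfl⟩ ⟨m, hm, hmn⟩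
  rw [ZMod.natCast_eq_natCast_iff', Nat.mod_eq_of_lt (by omega), Nat.mod_eq_of_lt (by omega)]
    at hmn
  omega

theorem stmt_11_general (p : ℕ) [Fact p.Prime] (hp5 : 5 ≤ p)
    (A B : Finset (ZMod p))
    (hA : A = (Finset.Icc 1 ((p - 1) / 2)).image (Nat.cast : ℕ → ZMod p))
    (hB : B = (Finset.Icc ((p + 1) / 2) (p - 1)).image (Nat.cast : ℕ → ZMod p))
    (R : Finset (ZMod p)) (hBR : (B \ R).Nonempty) :
    (stack p (A ∪ R) * (stack p (B \ R))ᵀ).rank = 1 := by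
  have hAB : Disjoint A B := hA ▸ hB ▸ disjoint_image_natCast_Icc_halves p
  have hdisj : Disjoint (A ∪ R) (B \ R) :=
    Finset.disjoint_union_left.mpr ⟨hAB.mono_right Finset.sdiff_subset, Finset.disjoint_sdiff⟩
  have hA1 : (1 : ZMod p) ∈ A := hA ▸ Finset.mem_image.mpr
    ⟨1, Finset.mem_Icc.mpr ⟨le_rfl, by omega⟩, Nat.cast_one⟩
  have : Nonempty {x // x ∈ A ∪ R} := ⟨⟨1, Finset.mem_union_left R hA1⟩⟩
  have : Nonempty {x // x ∈ B \ R} := hBR.to_subtype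
  rw [stack_mul_transpose_stack_of_disjoint hdisj, rank_of_fun_one]

/-- With `A = {1, …, (p-1)/2}`, `B = {(p+1)/2, …, p-1}`, `R ⊆ B`, and `B \ R`
nonempty, the modified matrices `H₁' = stack (A ∪ R)`, `H₂' = stack (B \ R)`
satisfy `rank (H₁' H₂'ᵀ) = 1` over `F₂`. -/
theorem stmt_11 (p : ℕ) [Fact p.Prime] (hp5 : 5 ≤ p) (hodd : p ≠ 2)
    (A B : Finset (ZMod p))
    (hA : A = (Finset.Icc 1 ((p - 1) / 2)).image (Nat.cast : ℕ → ZMod p))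
    (hB : B = (Finset.Icc ((p + 1) / 2) (p - 1)).image (Nat.cast : ℕ → ZMod p))
    (R : Finset (ZMod p)) (hR : R ⊆ B) (hBR : (B \ R).Nonempty) :
    (stack p (A ∪ R) * (stack p (B \ R))ᵀ).rank = 1 :=
  stmt_11_general p hp5 A B hA hB R hBR
end
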